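/- Let n₁ ≤ n₂ be positive integers, let M ⊂ {0,1}^{n₁n₂} be the (finite, nonempty) set of assignment vectors, let F be a symmetric fourth-order tensor on ℝ^{n₁n₂} with Frobenius norm ‖F‖₂, let α ≥ 3‖F‖₂, and define F⁴_α(x,y,z,t) = F⁴(x,y,z,t) + α·(⟨x,y⟩⟨z,t⟩ + ⟨x,z⟩⟨y,t⟩ + ⟨x,t⟩⟨y,z⟩)/3. Then max_{x,y,z,t ∈ M} F⁴_α(x,y,z,t) = max_{x ∈ M} F⁴_α(x,x,x,x) = max_{x ∈ M} (S⁴(x) + α n₁²). -/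

import Mathlib

/-- A fourth-order tensor is symmetric if its entries are invariant under any
permutation of the indices. -/
def Sym4 {ι : Type*} (F : ι → ι → ι → ι → ℝ) : Prop :=
  ∀ (σ : Equiv.Perm (Fin 4)) (v : Fin 4 → ι),
    F (v (σ 0)) (v (σ 1)) (v (σ 2)) (v (σ 3)) = F (v 0) (v 1) (v 2) (v 3)

/-- The multilinear form associated to a fourth-order tensor. -/
def mform4 {ι : Type*} [Fintype ι] (F : ι → ι → ι → ι → ℝ)
    (x y z t : EuclideanSpace ℝ ι) : ℝ :=
  ∑ i, ∑ j, ∑ k, ∑ l, F i j k l * x i * y j * z k * t l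

/-- The Frobenius norm `‖F‖₂` of a fourth-order tensor. -/
noncomputable def frobNorm4 {ι : Type*} [Fintype ι] (F : ι → ι → ι → ι → ℝ) : ℝ :=
  Real.sqrt (∑ i, ∑ j, ∑ k, ∑ l, (F i j k l) ^ 2)

/-- The modified multilinear form
`F⁴_α(x,y,z,t) = F⁴(x,y,z,t) + α (⟨x,y⟩⟨z,t⟩ + ⟨x,z⟩⟨y,t⟩ + ⟨x,t⟩⟨y,z⟩)/3`. -/
noncomputable def mform4α {ι : Type*} [Fintype ι] (F : ι → ι → ι → ι → ℝ) (α : ℝ)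
    (x y z t : EuclideanSpace ℝ ι) : ℝ :=
  mform4 F x y z t +
    α * ((inner ℝ x y : ℝ) * (inner ℝ z t : ℝ) + (inner ℝ x z : ℝ) * (inner ℝ y t : ℝ) +
        (inner ℝ x t : ℝ) * (inner ℝ y z : ℝ)) / 3

/-- The set of one-to-one assignment matrices, viewed as 0/1 vectors indexed by
`Fin n₁ × Fin n₂`: each row sums to 1 and each column sums to at most 1. -/
def AssignSet (n₁ n₂ : ℕ) : Set (EuclideanSpace ℝ (Fin n₁ × Fin n₂)) :=
  {x | (∀ p, x p = 0 ∨ x p = 1) ∧ (∀ i, ∑ j, x (i, j) = 1) ∧ (∀ j, ∑ i, x (i, j) ≤ 1)}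

/-! For `α ≥ 3 ‖F‖₂`, Cauchy–Schwarz gives `|F⁴(u,u,v,v)| ≤ ‖F‖₂ ‖u‖² ‖v‖²`, which the
`α`-term dominates, so `F⁴_α(u,u,v,v) ≥ 0` for all `u, v`. Polarizing the symmetric form
`F⁴_α` at `(x ± y, x ± y, z ∓ t, z ∓ t)` and at `(u + v, u + v, u - v, u - v)` then bounds
`F⁴_α(x,y,z,t)` by the mean of the four diagonal values `F⁴_α(w,w,w,w)`, `w ∈ {x,y,z,t}`,
so no quadruple beats the best diagonal one. On assignment vectors `⟨x,x⟩ = n₁`. -/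

open Finset

namespace Sym4
variable {ι : Type*} {F : ι → ι → ι → ι → ℝ}

lemma apply_swap₁₂ (hF : Sym4 F) (i j k l : ι) : F j i k l = F i j k l := by
  simpa [Equiv.swap_apply_def] using hF (Equiv.swap 0 1) ![i, j, k, l]

lemma apply_swap₂₃ (hF : Sym4 F) (i j k l : ι) : F i k j l = F i j k l := by
  simpa [Equiv.swap_apply_def] using hF (Equiv.swap 1 2) ![i, j, k, l]

lemma apply_swap₃₄ (hF : Sym4 F) (i j k l : ι) : F i j l k = F i j k l := by
  simpa [Equiv.swap_apply_def] using hF (Equiv.swap 2 3) ![i, j, k, l]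

end Sym4

section mform4
variable {ι : Type*} [Fintype ι] (F : ι → ι → ι → ι → ℝ) (a a' b b' c c' d d' : EuclideanSpace ℝ ι)

lemma mform4_add₁ : mform4 F (a + a') b c d = mform4 F a b c d + mform4 F a' b c d := by
  simp only [mform4, PiLp.add_apply, mul_add, add_mul, sum_add_distrib]

lemma mform4_add₂ : mform4 F a (b + b') c d = mform4 F a b c d + mform4 F a b' c d := by
  simp only [mform4, PiLp.add_apply, mul_add, add_mul, sum_add_distrib]

lemma mform4_add₃ : mform4 F a b (c + c') d = mform4 F a b c d + mform4 F a b c' d := by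
  simp only [mform4, PiLp.add_apply, mul_add, add_mul, sum_add_distrib]

lemma mform4_add₄ : mform4 F a b c (d + d') = mform4 F a b c d + mform4 F a b c d' := by
  simp only [mform4, PiLp.add_apply, mul_add, sum_add_distrib]

lemma mform4_sub₁ : mform4 F (a - a') b c d = mform4 F a b c d - mform4 F a' b c d := by
  simp only [mform4, PiLp.sub_apply, mul_sub, sub_mul, sum_sub_distrib]

lemma mform4_sub₂ : mform4 F a (b - b') c d = mform4 F a b c d - mform4 F a b' c d := by
  simp only [mform4, PiLp.sub_apply, mul_sub, sub_mul, sum_sub_distrib]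

lemma mform4_sub₃ : mform4 F a b (c - c') d = mform4 F a b c d - mform4 F a b c' d := by
  simp only [mform4, PiLp.sub_apply, mul_sub, sub_mul, sum_sub_distrib]

lemma mform4_sub₄ : mform4 F a b c (d - d') = mform4 F a b c d - mform4 F a b c d' := by
  simp only [mform4, PiLp.sub_apply, mul_sub, sum_sub_distrib]

end mform4

section mform4_symm
variable {ι : Type*} [Fintype ι] {F : ι → ι → ι → ι → ℝ}

lemma mform4_swap₁₂ (hF : Sym4 F) (a b c d : EuclideanSpace ℝ ι) :
    mform4 F b a c d = mform4 F a b c d := by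
  unfold mform4
  rw [sum_comm]
  refine sum_congr rfl fun i _ => sum_congr rfl fun j _ => sum_congr rfl fun k _ =>
    sum_congr rfl fun l _ => ?_
  rw [hF.apply_swap₁₂]; ring

lemma mform4_swap₂₃ (hF : Sym4 F) (a b c d : EuclideanSpace ℝ ι) :
    mform4 F a c b d = mform4 F a b c d := by
  refine sum_congr rfl fun i _ => ?_
  rw [sum_comm]
  refine sum_congr rfl fun j _ => sum_congr rfl fun k _ => sum_congr rfl fun l _ => ?_
  rw [hF.apply_swap₂₃]; ring

lemma mform4_swap₃₄ (hF : Sym4 F) (a b c d : EuclideanSpace ℝ ι) :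
    mform4 F a b d c = mform4 F a b c d := by
  refine sum_congr rfl fun i _ => sum_congr rfl fun j _ => ?_
  rw [sum_comm]
  refine sum_congr rfl fun k _ => sum_congr rfl fun l _ => ?_
  rw [hF.apply_swap₃₄]; ring

end mform4_symm

section polarization
variable {ι : Type*} [Fintype ι] {F : ι → ι → ι → ι → ℝ}

lemma mform4α_polarization (hF : Sym4 F) (α : ℝ) (x y z t : EuclideanSpace ℝ ι) :
    mform4α F α (x + y) (x + y) (z - t) (z - t) +
      mform4α F α (x - y) (x - y) (z + t) (z + t) =
      2 * (mform4α F α x x z z + mform4α F α y y z z + mform4α F α x x t t +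
        mform4α F α y y t t) - 8 * mform4α F α x y z t := by
  simp only [mform4α, mform4_add₁, mform4_add₂, mform4_add₃, mform4_add₄, mform4_sub₁,
    mform4_sub₂, mform4_sub₃, mform4_sub₄, inner_add_left, inner_add_right, inner_sub_left,
    inner_sub_right]
  simp only [mform4_swap₁₂ hF, mform4_swap₃₄ hF, real_inner_comm]
  ring

lemma mform4α_add_sub (hF : Sym4 F) (α : ℝ) (u v : EuclideanSpace ℝ ι) :
    mform4α F α (u + v) (u + v) (u - v) (u - v) =
      mform4α F α u u u u + mform4α F α v v v v - 2 * mform4α F α u u v v := by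
  simp only [mform4α, mform4_add₁, mform4_add₂, mform4_sub₃, mform4_sub₄, inner_add_left,
    inner_add_right, inner_sub_left, inner_sub_right]
  simp only [mform4_swap₁₂ hF, mform4_swap₂₃ hF, mform4_swap₃₄ hF, real_inner_comm]
  ring

end polarization

section bound
variable {ι : Type*} [Fintype ι]

lemma abs_mform4_le (F : ι → ι → ι → ι → ℝ) (a b c d : EuclideanSpace ℝ ι) :
    |mform4 F a b c d| ≤ frobNorm4 F * (‖a‖ * ‖b‖ * ‖c‖ * ‖d‖) := by
  have hcs := sum_mul_sq_le_sq_mul_sq (univ : Finset (ι × ι × ι × ι))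
    (fun p => F p.1 p.2.1 p.2.2.1 p.2.2.2) (fun p => a p.1 * b p.2.1 * c p.2.2.1 * d p.2.2.2)
  have hprod : ∑ i, ∑ j, ∑ k, ∑ l, (a i * b j * c k * d l) ^ 2 =
      (‖a‖ * ‖b‖ * ‖c‖ * ‖d‖) ^ 2 := by
    simp only [mul_pow, ← mul_sum, ← sum_mul, EuclideanSpace.norm_sq_eq, Real.norm_eq_abs, sq_abs]
  simp only [Fintype.sum_prod_type, ← mul_assoc, hprod] at hcs
  calc |mform4 F a b c d|
      ≤ √((∑ i, ∑ j, ∑ k, ∑ l, F i j k l ^ 2) * (‖a‖ * ‖b‖ * ‖c‖ * ‖d‖) ^ 2) :=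
        Real.abs_le_sqrt hcs
    _ = frobNorm4 F * (‖a‖ * ‖b‖ * ‖c‖ * ‖d‖) := by
        rw [Real.sqrt_mul' _ (sq_nonneg _), Real.sqrt_sq (by positivity), frobNorm4]

lemma mform4α_nonneg {F : ι → ι → ι → ι → ℝ} {α : ℝ} (hα : 3 * frobNorm4 F ≤ α)
    (u v : EuclideanSpace ℝ ι) : 0 ≤ mform4α F α u u v v := by
  have hF := abs_mform4_le F u u v v
  have hα₀ : 0 ≤ α := (mul_nonneg zero_le_three (Real.sqrt_nonneg _)).trans hα
  have huv : 0 ≤ ‖u‖ ^ 2 * ‖v‖ ^ 2 := by positivity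
  simp only [mform4α, real_inner_self_eq_norm_sq]
  nlinarith [neg_abs_le (mform4 F u u v v), mul_le_mul_of_nonneg_right hα huv,
    mul_nonneg hα₀ (sq_nonneg (inner ℝ u v))]

end bound

section diagonal
variable {ι : Type*} [Fintype ι] {F : ι → ι → ι → ι → ℝ} {α : ℝ}

lemma two_mul_mform4α_le (hF : Sym4 F) (hα : 3 * frobNorm4 F ≤ α) (u v : EuclideanSpace ℝ ι) :
    2 * mform4α F α u u v v ≤ mform4α F α u u u u + mform4α F α v v v v := by
  have h := mform4α_nonneg hα (u + v) (u - v)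
  rw [mform4α_add_sub hF] at h
  linarith

lemma four_mul_mform4α_le (hF : Sym4 F) (hα : 3 * frobNorm4 F ≤ α)
    (x y z t : EuclideanSpace ℝ ι) :
    4 * mform4α F α x y z t ≤
      mform4α F α x x x x + mform4α F α y y y y + mform4α F α z z z z + mform4α F α t t t t := by
  have h := mform4α_polarization hF α x y z t
  linarith [mform4α_nonneg hα (x + y) (z - t), mform4α_nonneg hα (x - y) (z + t),
    two_mul_mform4α_le hF hα x z, two_mul_mform4α_le hF hα y z,
    two_mul_mform4α_le hF hα x t, two_mul_mform4α_le hF hα y t]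

lemma sSup_mform4α_eq_sSup_diag (hF : Sym4 F) (hα : 3 * frobNorm4 F ≤ α)
    (s : Set (EuclideanSpace ℝ ι)) :
    sSup {r : ℝ | ∃ x ∈ s, ∃ y ∈ s, ∃ z ∈ s, ∃ t ∈ s, r = mform4α F α x y z t} =
      sSup {r : ℝ | ∃ x ∈ s, r = mform4α F α x x x x} := by
  refine csSup_eq_csSup_of_forall_exists_le ?_ fun r ⟨x, hx, hr⟩ =>
    ⟨r, ⟨x, hx, x, hx, x, hx, x, hx, hr⟩, le_rfl⟩
  rintro r ⟨x, hx, y, hy, z, hz, t, ht, rfl⟩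
  by_contra! hlt
  linarith [four_mul_mform4α_le hF hα x y z t, hlt _ ⟨x, hx, rfl⟩, hlt _ ⟨y, hy, rfl⟩,
    hlt _ ⟨z, hz, rfl⟩, hlt _ ⟨t, ht, rfl⟩]

lemma mform4α_self (F : ι → ι → ι → ι → ℝ) (α : ℝ) (x : EuclideanSpace ℝ ι) :
    mform4α F α x x x x = mform4 F x x x x + α * (inner ℝ x x) ^ 2 := by
  rw [mform4α]; ring

end diagonal

lemma inner_self_of_mem_assignSet {n₁ n₂ : ℕ} {x : EuclideanSpace ℝ (Fin n₁ × Fin n₂)}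
    (hx : x ∈ AssignSet n₁ n₂) : inner ℝ x x = (n₁ : ℝ) := by
  obtain ⟨hbool, hrow, -⟩ := hx
  have hsq : ∀ p, x p * x p = x p := fun p => by rcases hbool p with h | h <;> simp [h]
  simp only [PiLp.inner_apply, RCLike.inner_apply, conj_trivial, hsq, Fintype.sum_prod_type, hrow]
  simp

theorem stmt_17_general {n₁ n₂ : ℕ}
    (F : Fin n₁ × Fin n₂ → Fin n₁ × Fin n₂ → Fin n₁ × Fin n₂ → Fin n₁ × Fin n₂ → ℝ)
    (hF : Sym4 F) (α : ℝ) (hα : 3 * frobNorm4 F ≤ α) :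
    sSup {r : ℝ | ∃ x ∈ AssignSet n₁ n₂, ∃ y ∈ AssignSet n₁ n₂,
          ∃ z ∈ AssignSet n₁ n₂, ∃ t ∈ AssignSet n₁ n₂, r = mform4α F α x y z t} =
        sSup {r : ℝ | ∃ x ∈ AssignSet n₁ n₂, r = mform4α F α x x x x} ∧
      sSup {r : ℝ | ∃ x ∈ AssignSet n₁ n₂, r = mform4α F α x x x x} =
        sSup {r : ℝ | ∃ x ∈ AssignSet n₁ n₂,
          r = mform4 F x x x x + α * (n₁ : ℝ) ^ 2} := by
  refine ⟨sSup_mform4α_eq_sSup_diag hF hα _, ?_⟩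
  congr 1
  ext r
  refine exists_congr fun x => and_congr_right fun hx => ?_
  rw [mform4α_self, inner_self_of_mem_assignSet hx]

/-- For `α ≥ 3 ‖F‖₂`, maximizing the modified multilinear form `F⁴_α` over quadruples of
assignment vectors is the same as maximizing it on the diagonal, which is maximizing
`S⁴(x) + α n₁²` over assignment vectors. -/
theorem stmt_17 {n₁ n₂ : ℕ} (h₁ : 0 < n₁) (h₂ : n₁ ≤ n₂)
    (F : Fin n₁ × Fin n₂ → Fin n₁ × Fin n₂ → Fin n₁ × Fin n₂ → Fin n₁ × Fin n₂ → ℝ)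
    (hF : Sym4 F) (α : ℝ) (hα : 3 * frobNorm4 F ≤ α) :
    sSup {r : ℝ | ∃ x ∈ AssignSet n₁ n₂, ∃ y ∈ AssignSet n₁ n₂,
          ∃ z ∈ AssignSet n₁ n₂, ∃ t ∈ AssignSet n₁ n₂, r = mform4α F α x y z t} =
        sSup {r : ℝ | ∃ x ∈ AssignSet n₁ n₂, r = mform4α F α x x x x} ∧
      sSup {r : ℝ | ∃ x ∈ AssignSet n₁ n₂, r = mform4α F α x x x x} =
        sSup {r : ℝ | ∃ x ∈ AssignSet n₁ n₂,
          r = mform4 F x x x x + α * (n₁ : ℝ) ^ 2} :=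
  stmt_17_general F hF α hα
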